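/- arXiv:1210.8253 — 4 statements merged into one kernel-verified Lean document; each statement's English description precedes it below -/
import Mathlib

section
/- Let C ⊆ F^n be a code containing the all-zero vector that is transitive and whose symmetry group is trivial. Then C admits a normalized propelinear structure. -/
open Finset

/-- The binary vector space `F^n`. -/
abbrev F (n : ℕ) : Type := Fin n → ZMod 2

/-- Action of a coordinate permutation: `(π x) i = x (π⁻¹ i)`. -/
def permAct {n : ℕ} (π : Equiv.Perm (Fin n)) (x : F n) : F n := fun i => x (π⁻¹ i)

/-- `(v, π)` is an isometry fixing the code `C` set-wise. -/
def IsIsoPair {n : ℕ} (C : Set (F n)) (v : F n) (π : Equiv.Perm (Fin n)) : Prop :=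
  (fun x => v + permAct π x) '' C = C

/-- `C` is a single-error-correcting perfect binary code. -/
def IsPerfectCode {n : ℕ} (C : Set (F n)) : Prop :=
  ∀ x : F n, ∃! y : F n, y ∈ C ∧ hammingDist x y ≤ 1

/-- `P` is a propelinear structure on the code `C`. -/
def IsPropStructure {n : ℕ} (C : Set (F n)) (P : F n → Equiv.Perm (Fin n)) : Prop :=
  (∀ x ∈ C, IsIsoPair C x (P x)) ∧
  (∀ x ∈ C, ∀ y ∈ C, P (x + permAct (P x) y) = P x * P y)

/-- `C` admits a propelinear structure. -/
def IsPropelinear {n : ℕ} (C : Set (F n)) : Prop :=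
  ∃ P : F n → Equiv.Perm (Fin n), IsPropStructure C P

/-- The rank of a code: dimension of its linear span over GF(2). -/
noncomputable def codeRank {n : ℕ} (C : Set (F n)) : ℕ :=
  Module.finrank (ZMod 2) (Submodule.span (ZMod 2) C)

/-- The kernel of a code `C`: codewords whose translate fixes `C`. -/
def codeKernel {n : ℕ} (C : Set (F n)) : Set (F n) :=
  {x ∈ C | (fun c => x + c) '' C = C}

/-- A propelinear structure is normalized if codewords in the same coset
of the kernel get the same permutation. -/
def IsNormalized {n : ℕ} (C : Set (F n)) (P : F n → Equiv.Perm (Fin n)) : Prop :=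
  ∀ x ∈ C, ∀ y ∈ C, x + y ∈ codeKernel C → P x = P y

/-- A code is transitive if its automorphism group acts transitively on it. -/
def IsTransitive {n : ℕ} (C : Set (F n)) : Prop :=
  ∀ x ∈ C, ∀ y ∈ C, ∃ v π, IsIsoPair C v π ∧ v + permAct π x = y

/-- The (ZMod 2) weight parity `|x| = Σ_i x_i`. -/
def wt {n : ℕ} (x : F n) : ZMod 2 := ∑ i, x i

/-- Assemble a vector of `F^(2n+1)` from a first block of `n` coordinates,
a middle coordinate and a last block of `n` coordinates. -/
def vasVec {n : ℕ} (a : F n) (b : ZMod 2) (c : F n) : F (2 * n + 1) :=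
  fun i =>
    if h : (i : ℕ) < n then a ⟨i, h⟩
    else if h' : (i : ℕ) = n then b
    else c ⟨(i : ℕ) - (n + 1), by have := i.isLt; omega⟩

/-- The Vasil'ev code of `C` with function `lam`. -/
def vasCode {n : ℕ} (C : Set (F n)) (lam : F n → ZMod 2) : Set (F (2 * n + 1)) :=
  {w | ∃ x : F n, ∃ y ∈ C, w = vasVec (x + y) (wt x + lam y) x}

/-- Assemble a vector of `F^(tm+t+m)` from blocks of `tm`, `t` and `m` coordinates. -/
def mollVec {t m : ℕ} (x : F (t * m)) (b : F t) (c : F m) : F (t * m + t + m) :=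
  fun i =>
    if h : (i : ℕ) < t * m then x ⟨i, h⟩
    else if h' : (i : ℕ) < t * m + t then b ⟨(i : ℕ) - t * m, by omega⟩
    else c ⟨(i : ℕ) - (t * m + t), by have := i.isLt; omega⟩

/-- First generalized parity-check function: `p1(x)_i = Σ_j x_{ij}`. -/
def p1 {t m : ℕ} (x : F (t * m)) : F t := fun i => ∑ j : Fin m, x (finProdFinEquiv (i, j))

/-- Second generalized parity-check function: `p2(x)_j = Σ_i x_{ij}`. -/
def p2 {t m : ℕ} (x : F (t * m)) : F m := fun j => ∑ i : Fin t, x (finProdFinEquiv (i, j))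

/-- The Mollard code of `Ct` and `Cm` with function `f`. -/
def mollCode {t m : ℕ} (Ct : Set (F t)) (Cm : Set (F m)) (f : F t → F m) :
    Set (F (t * m + t + m)) :=
  {w | ∃ x : F (t * m), ∃ y ∈ Ct, ∃ z ∈ Cm, w = mollVec x (y + p1 x) (z + p2 x + f y)}

lemma permAct_mul' {n : ℕ} (π σ : Equiv.Perm (Fin n)) (x : F n) :
    permAct (π * σ) x = permAct π (permAct σ x) := by
  funext i; simp [permAct, mul_inv_rev]

lemma permAct_one' {n : ℕ} (x : F n) : permAct 1 x = x := rfl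

lemma add_self_F {n : ℕ} (x : F n) : x + x = 0 := by
  funext i; exact CharTwo.add_self_eq_zero (x i)

lemma image_perm_eq {n : ℕ} {C : Set (F n)} {x : F n} {π : Equiv.Perm (Fin n)}
    (h : IsIsoPair C x π) : permAct π '' C = (fun c => x + c) '' C := by
  have h1 : (fun c => x + permAct π c) = (fun c => x + c) ∘ permAct π := rfl
  have h : ((fun c => x + c) ∘ permAct π) '' C = C := h1 ▸ h
  rw [Set.image_comp] at h
  have := congrArg (Set.image (fun c => x + c)) h
  rw [← Set.image_comp] at this
  have h2 : ((fun c => x + c) ∘ fun c : F n => x + c) = id := by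
    funext c; simp [Function.comp, ← add_assoc, add_self_F]
  rw [h2, Set.image_id] at this
  rw [this]

lemma iso_unique {n : ℕ} (C : Set (F n))
    (hsym : ∀ π : Equiv.Perm (Fin n), permAct π '' C = C → π = 1)
    {x : F n} {π π' : Equiv.Perm (Fin n)}
    (h : IsIsoPair C x π) (h' : IsIsoPair C x π') : π = π' := by
  have key : permAct π '' C = permAct π' '' C := by
    rw [image_perm_eq h, image_perm_eq h']
  have hcomp : permAct (π'⁻¹ * π) '' C = C := by
    have e : permAct (π'⁻¹ * π) = permAct π'⁻¹ ∘ permAct π := by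
      funext x; exact permAct_mul' _ _ _
    rw [e, Set.image_comp, key, ← Set.image_comp]
    have e2 : permAct π'⁻¹ ∘ permAct π' = id := by
      funext x
      show permAct π'⁻¹ (permAct π' x) = x
      rw [← permAct_mul', inv_mul_cancel, permAct_one']
    rw [e2, Set.image_id]
  have := hsym _ hcomp
  have : π'⁻¹ * π = 1 := this
  exact (eq_of_inv_mul_eq_one this).symm

/-- A transitive code containing `0` with trivial symmetry group admits a
normalized propelinear structure. -/
theorem transitive_trivial_symmetry_normalized_propelinear {n : ℕ} (C : Set (F n))
    (h0 : (0 : F n) ∈ C) (htrans : IsTransitive C)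
    (hsym : ∀ π : Equiv.Perm (Fin n), permAct π '' C = C → π = 1) :
    ∃ P : F n → Equiv.Perm (Fin n), IsPropStructure C P ∧ IsNormalized C P := by
  classical
  have hex : ∀ x ∈ C, ∃ π, IsIsoPair C x π := by
    intro x hx
    obtain ⟨v, π, hiso, heq⟩ := htrans 0 h0 x hx
    have hz : permAct π (0 : F n) = 0 := rfl
    rw [hz, add_zero] at heq
    have : v = x := heq
    exact ⟨π, this ▸ hiso⟩
  set P : F n → Equiv.Perm (Fin n) :=
    fun x => if hx : x ∈ C then Classical.choose (hex x hx) else 1 with hP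
  have hPspec : ∀ x ∈ C, IsIsoPair C x (P x) := by
    intro x hx
    simp only [hP, dif_pos hx]
    exact Classical.choose_spec (hex x hx)
  have huniq : ∀ x ∈ C, ∀ π, IsIsoPair C x π → P x = π := by
    intro x hx π hπ
    exact iso_unique C hsym (hPspec x hx) hπ
  refine ⟨P, ⟨hPspec, ?_⟩, ?_⟩
  · -- propelinear composition
    intro x hx y hy
    have hmem : x + permAct (P x) y ∈ C := by
      have := hPspec x hx
      rw [← this]
      exact ⟨y, hy, rfl⟩
    apply huniq _ hmem
    show (fun c => (x + permAct (P x) y) + permAct (P x * P y) c) '' C = C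
    have e : (fun c => (x + permAct (P x) y) + permAct (P x * P y) c) =
        (fun c => x + permAct (P x) c) ∘ (fun c => y + permAct (P y) c) := by
      funext c
      simp only [Function.comp]
      rw [permAct_mul']
      show x + permAct (P x) y + permAct (P x) (permAct (P y) c) =
        x + permAct (P x) (y + permAct (P y) c)
      have : permAct (P x) (y + permAct (P y) c) =
          permAct (P x) y + permAct (P x) (permAct (P y) c) := rfl
      rw [this, add_assoc]
    rw [e, Set.image_comp, hPspec y hy, hPspec x hx]
  · -- normalized
    intro x hx y hy hker
    obtain ⟨hkerC, hkeradd⟩ := hker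
    apply huniq x hx
    show (fun c => x + permAct (P y) c) '' C = C
    have h1 : (fun c => x + permAct (P y) c) =
        (fun c => (x + y) + c) ∘ (fun c => y + permAct (P y) c) := by
      funext c
      simp only [Function.comp]
      rw [add_assoc, ← add_assoc y y, add_self_F, zero_add]
    rw [h1, Set.image_comp, hPspec y hy, hkeradd]
end

section
/- Let C ⊆ F^n be a perfect binary code containing the all-zero vector, let λ : C → ZMod 2 be any map, and let C' = {(x + y, |x| + λ(y), x) : x ∈ F^n, y ∈ C} ⊆ F^{2n+1} be the corresponding Vasil'ev code. Then rank(C') = rank({(y, λ(y)) : y ∈ C}) + n, where {(y, λ(y)) : y ∈ C} ⊆ F^{n+1}. -/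
open Finset

section VasilevAux

variable {n : ℕ}

lemma vasVec_add (a a' : F n) (b b' : ZMod 2) (c c' : F n) :
    vasVec (a + a') (b + b') (c + c') = vasVec a b c + vasVec a' b' c' := by
  funext i
  simp only [vasVec, Pi.add_apply]
  split_ifs <;> rfl

lemma wt_add (x y : F n) : wt (x + y) = wt x + wt y := by
  simp [wt, Finset.sum_add_distrib]

lemma wt_zero : wt (0 : F n) = 0 := by simp [wt]

lemma vasVec_apply_first (a : F n) (b : ZMod 2) (c : F n) (i : Fin (2 * n + 1))
    (h : (i : ℕ) < n) : vasVec a b c i = a ⟨i, h⟩ := dif_pos h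

lemma vasVec_apply_mid (a : F n) (b : ZMod 2) (c : F n) (i : Fin (2 * n + 1))
    (h : (i : ℕ) = n) : vasVec a b c i = b := by
  rw [vasVec, dif_neg (by omega), dif_pos h]

lemma vasVec_apply_last (a : F n) (b : ZMod 2) (c : F n) (i : Fin (2 * n + 1))
    (h : n < (i : ℕ)) :
    vasVec a b c i = c ⟨(i : ℕ) - (n + 1), by have := i.isLt; omega⟩ := by
  rw [vasVec, dif_neg (by omega), dif_neg (by omega)]

/-- The embedding of `F^(n+1)` onto the first `n+1` coordinates of `F^(2n+1)`. -/
noncomputable def phiV (n : ℕ) : F (n + 1) →ₗ[ZMod 2] F (2 * n + 1) :=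
  AddMonoidHom.toZModLinearMap 2
    { toFun := fun w => vasVec (fun i => w i.castSucc) (w (Fin.last n)) 0
      map_zero' := by
        funext i
        simp only [vasVec, Pi.zero_apply]
        split_ifs <;> rfl
      map_add' := fun w w' => by
        funext i
        simp only [vasVec, Pi.add_apply]
        split_ifs <;> simp }

lemma phiV_apply (w : F (n + 1)) :
    phiV n w = vasVec (fun i => w i.castSucc) (w (Fin.last n)) 0 := rfl

lemma phiV_snoc (y : F n) (b : ZMod 2) : phiV n (Fin.snoc y b) = vasVec y b 0 := by
  have h1 : (fun i => (Fin.snoc y b : F (n + 1)) i.castSucc) = y := by funext i; simp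
  have h2 : (Fin.snoc y b : F (n + 1)) (Fin.last n) = b := by simp
  rw [phiV_apply, h1, h2]

/-- The linear map `x ↦ (x, |x|, x)`. -/
noncomputable def psiV (n : ℕ) : F n →ₗ[ZMod 2] F (2 * n + 1) :=
  AddMonoidHom.toZModLinearMap 2
    { toFun := fun x => vasVec x (wt x) x
      map_zero' := by
        funext i
        simp only [vasVec, wt_zero, Pi.zero_apply]
        split_ifs <;> rfl
      map_add' := fun x x' => by
        show vasVec (x + x') (wt (x + x')) (x + x')
          = vasVec x (wt x) x + vasVec x' (wt x') x'
        rw [wt_add]; exact vasVec_add x x' _ _ x x' }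

lemma psiV_apply (x : F n) : psiV n x = vasVec x (wt x) x := rfl

lemma phiV_inj : Function.Injective (phiV n) := by
  intro w w' h
  funext j
  refine Fin.lastCases ?_ (fun i => ?_) j
  · have h1 := congrFun h ⟨n, by omega⟩
    rw [phiV_apply, phiV_apply, vasVec_apply_mid _ _ _ _ rfl,
      vasVec_apply_mid _ _ _ _ rfl] at h1
    exact h1
  · have h1 := congrFun h ⟨(i : ℕ), by have := i.isLt; omega⟩
    rw [phiV_apply, phiV_apply, vasVec_apply_first _ _ _ _ (by exact i.isLt),
      vasVec_apply_first _ _ _ _ (by exact i.isLt)] at h1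
    simpa using h1

lemma psiV_inj : Function.Injective (psiV n) := by
  intro x x' h
  funext j
  have h1 := congrFun h ⟨(j : ℕ), by have := j.isLt; omega⟩
  rw [psiV_apply, psiV_apply, vasVec_apply_first _ _ _ _ (by exact j.isLt),
    vasVec_apply_first _ _ _ _ (by exact j.isLt)] at h1
  simpa using h1

end VasilevAux

/-- The rank of a Vasil'ev code equals the rank of `{(y, λ(y)) : y ∈ C}` plus `n`. -/
theorem vasilev_rank_reduction {n : ℕ} (C : Set (F n))
    (hC : IsPerfectCode C) (h0 : (0 : F n) ∈ C) (lam : F n → ZMod 2) :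
    codeRank (vasCode C lam) =
      codeRank {w : F (n + 1) | ∃ y ∈ C, w = Fin.snoc y (lam y)} + n := by
  classical
  set D : Set (F (n + 1)) := {w : F (n + 1) | ∃ y ∈ C, w = Fin.snoc y (lam y)} with hD
  set S : Submodule (ZMod 2) (F (2 * n + 1)) :=
    (Submodule.span (ZMod 2) D).map (phiV n) with hS
  set T : Submodule (ZMod 2) (F (2 * n + 1)) := LinearMap.range (psiV n) with hT
  have hspan : Submodule.span (ZMod 2) (vasCode C lam) = S ⊔ T := by
    apply le_antisymm
    · rw [Submodule.span_le]
      rintro w ⟨x, y, hy, rfl⟩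
      have heq : phiV n (Fin.snoc y (lam y)) + psiV n x
          = vasVec (x + y) (wt x + lam y) x := by
        rw [phiV_snoc, psiV_apply, ← vasVec_add, add_comm y x,
          add_comm (lam y) (wt x), zero_add]
      rw [← heq]
      exact Submodule.add_mem_sup
        (Submodule.mem_map_of_mem (Submodule.subset_span ⟨y, hy, rfl⟩))
        (LinearMap.mem_range_self _ _)
    · apply sup_le
      · rw [hS, Submodule.map_span, Submodule.span_le]
        rintro _ ⟨w, ⟨y, hy, rfl⟩, rfl⟩
        apply Submodule.subset_span
        refine ⟨0, y, hy, ?_⟩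
        rw [phiV_snoc]
        simp [wt_zero]
      · rw [hT]
        rintro _ ⟨x, rfl⟩
        have h1 : vasVec (x + 0) (wt x + lam 0) x
            ∈ Submodule.span (ZMod 2) (vasCode C lam) :=
          Submodule.subset_span ⟨x, 0, h0, rfl⟩
        have h2 : vasVec ((0 : F n) + 0) (wt 0 + lam 0) 0
            ∈ Submodule.span (ZMod 2) (vasCode C lam) :=
          Submodule.subset_span ⟨0, 0, h0, rfl⟩
        have h3 := Submodule.add_mem _ h1 h2
        rw [← vasVec_add] at h3
        have hb : wt x + lam 0 + (wt (0 : F n) + lam 0) = wt x := by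
          rw [wt_zero]
          generalize lam 0 = a
          generalize wt x = b
          revert a b; decide
        rw [hb] at h3
        simp only [add_zero, zero_add] at h3
        rw [psiV_apply]
        exact h3
  have hdisj : S ⊓ T = ⊥ := by
    rw [eq_bot_iff]
    rintro v ⟨hv1, hv2⟩
    obtain ⟨x, rfl⟩ := hv2
    obtain ⟨w, -, hw⟩ := hv1
    have hx : x = 0 := by
      funext j
      have h1 := congrFun hw ⟨n + 1 + (j : ℕ), by have := j.isLt; omega⟩
      rw [phiV_apply, psiV_apply,
        vasVec_apply_last _ _ _ _ (by simp only [Fin.val_mk]; omega),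
        vasVec_apply_last _ _ _ _ (by simp only [Fin.val_mk]; omega)] at h1
      simp only [Fin.val_mk, Nat.add_sub_cancel_left, Fin.eta, Pi.zero_apply] at h1
      exact h1.symm
    rw [hx, map_zero]
    exact Submodule.zero_mem ⊥
  have hmap : Module.finrank (ZMod 2) S
      = Module.finrank (ZMod 2) (Submodule.span (ZMod 2) D) :=
    (LinearEquiv.finrank_eq
      (Submodule.equivMapOfInjective (phiV n) phiV_inj (Submodule.span (ZMod 2) D))).symm
  have hrange : Module.finrank (ZMod 2) T = n := by
    rw [hT, LinearMap.finrank_range_of_inj psiV_inj]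
    simp [Module.finrank_pi]
  have hsum := Submodule.finrank_sup_add_finrank_inf_eq S T
  rw [hdisj, finrank_bot, add_zero] at hsum
  rw [codeRank, codeRank, hspan, hsum, hmap, hrange]
end

section
/- Let C ⊆ F^n be a perfect binary code and let λ : C → ZMod 2 be an arbitrary map. Then the Vasil'ev code C' = {(x + y, |x| + λ(y), x) : x ∈ F^n, y ∈ C} ⊆ F^{2n+1} is a perfect binary code of length 2n+1. -/
open Finset

/-! Write a word of length `2n+1` as `(a, b, c)`. Its distance to the codeword with parameters
`(x, y)` is `d(a + y, x) + [b + λ(y) ≠ |x|] + d(c, x)`, and the triangle inequality bounds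
`d(a + c, y)` by this; so only the codeword `y₀ ∈ C` nearest to `a + c` can occur. With `y = y₀`,
the words `p = a + y₀` and `q = c` are at distance at most one: if `p = q` then `x = p` is the only
choice, and otherwise `|p| ≠ |q|` and the one of `p`, `q` whose parity is `b + λ(y₀)` is. -/

section Hamming

variable {ι : Type*} [Fintype ι]

theorem hammingDist_eq_hammingNorm_add (x y : ι → ZMod 2) :
    hammingDist x y = hammingNorm (x + y) := by
  rw [hammingDist_eq_hammingNorm]
  congr 1
  funext i
  exact congrArg (· + y i) (ZMod.neg_eq_self_mod_two (x i))

theorem hammingDist_add_left_eq (a x y : ι → ZMod 2) :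
    hammingDist (a + y) x = hammingDist a (x + y) := by
  rw [hammingDist_eq_hammingNorm_add, hammingDist_eq_hammingNorm_add, add_right_comm, add_assoc]

theorem hammingDist_eq_sum {β : Type*} [DecidableEq β] (x y : ι → β) :
    hammingDist x y = ∑ i, if x i = y i then 0 else 1 := by
  rw [hammingDist, card_filter]
  exact sum_congr rfl fun i _ => by split_ifs <;> simp_all

theorem hammingDist_append {β : Type*} [DecidableEq β] {m k : ℕ} (x y : Fin m → β)
    (x' y' : Fin k → β) :
    hammingDist (Fin.append x x') (Fin.append y y') = hammingDist x y + hammingDist x' y' := by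
  simp only [hammingDist_eq_sum, Fin.sum_univ_add, Fin.append_left, Fin.append_right]

theorem hammingDist_cons {β : Type*} [DecidableEq β] {k : ℕ} (b b' : β) (x y : Fin k → β) :
    hammingDist (Fin.cons b x : Fin (k + 1) → β) (Fin.cons b' y) =
      (if b = b' then 0 else 1) + hammingDist x y := by
  simp only [hammingDist_eq_sum, Fin.sum_univ_succ, Fin.cons_zero, Fin.cons_succ]

theorem hammingDist_comp_equiv {κ β : Type*} [Fintype κ] [DecidableEq β] (e : κ ≃ ι)
    (x y : ι → β) :
    hammingDist (x ∘ e) (y ∘ e) = hammingDist x y := by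
  simp only [hammingDist_eq_sum, Function.comp_apply]
  exact e.sum_comp fun i => if x i = y i then 0 else 1

end Hamming

section Vasilev

variable {n : ℕ}

def vasIndexEquiv (n : ℕ) : Fin (n + (n + 1)) ≃ Fin (2 * n + 1) := finCongr (by omega)

theorem vasVec_comp_vasIndexEquiv (a : F n) (b : ZMod 2) (c : F n) :
    vasVec a b c ∘ vasIndexEquiv n = Fin.append a (Fin.cons b c) := by
  funext j
  refine Fin.addCases (fun i => ?_) (fun i => Fin.cases ?_ (fun i => ?_) i) j
  · simp [vasVec, vasIndexEquiv]
  · simp [vasVec, vasIndexEquiv]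
  · simp only [Function.comp_apply, vasVec, vasIndexEquiv, finCongr_apply, Fin.val_cast,
      Fin.val_natAdd, Fin.val_succ, add_lt_iff_neg_left, not_lt_zero, ↓reduceDIte,
      Nat.add_eq_left, Nat.add_eq_zero_iff, one_ne_zero, and_false, Fin.append_right, Fin.cons_succ]
    exact congrArg c (Fin.ext (by dsimp only; omega))

theorem exists_eq_vasVec (w : F (2 * n + 1)) : ∃ a b c, w = vasVec a b c := by
  set v := w ∘ vasIndexEquiv n
  refine ⟨fun i => v (Fin.castAdd _ i), v (Fin.natAdd n 0), fun i => v (Fin.natAdd n i.succ), ?_⟩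
  have hv : v = _ := (Fin.append_castAdd_natAdd (f := v)).symm
  rw [← Fin.cons_self_tail (fun i => v (Fin.natAdd n i)), ← vasVec_comp_vasIndexEquiv] at hv
  exact (vasIndexEquiv n).surjective.injective_comp_right hv

theorem hammingDist_vasVec (a a' : F n) (b b' : ZMod 2) (c c' : F n) :
    hammingDist (vasVec a b c) (vasVec a' b' c') =
      hammingDist a a' + ((if b = b' then 0 else 1) + hammingDist c c') := by
  rw [← hammingDist_comp_equiv (vasIndexEquiv n), vasVec_comp_vasIndexEquiv,
    vasVec_comp_vasIndexEquiv, hammingDist_append, hammingDist_cons]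

theorem wt_eq_hammingNorm (x : F n) : wt x = hammingNorm x := by
  rw [wt, hammingNorm, card_filter, Nat.cast_sum]
  exact sum_congr rfl fun i _ => by generalize x i = t; revert t; decide

theorem wt_add_wt (p q : F n) : wt p + wt q = hammingDist p q := by
  rw [hammingDist_eq_hammingNorm_add, ← wt_eq_hammingNorm, wt, wt, wt, ← sum_add_distrib]
  rfl

theorem hammingDist_vasVec_codeword (a c x y : F n) (b l : ZMod 2) :
    hammingDist (vasVec a b c) (vasVec (x + y) (wt x + l) x) =
      hammingDist (a + y) x + ((if b + l = wt x then 0 else 1) + hammingDist c x) := by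
  rw [hammingDist_vasVec, ← hammingDist_add_left_eq]
  simp only [CharTwo.add_eq_iff_eq_add (a := b)]

theorem hammingDist_add_hammingDist_add_parity_le_one_iff {p q : F n}
    (hpq : hammingDist p q = 1) (β : ZMod 2) (x : F n) :
    hammingDist p x + ((if β = wt x then 0 else 1) + hammingDist q x) ≤ 1 ↔
      β = wt x ∧ (x = p ∨ x = q) := by
  constructor
  · intro hx
    have := hammingDist_triangle p x q
    rw [hammingDist_comm x q] at this
    refine ⟨by by_contra h; rw [if_neg h] at hx; omega, ?_⟩
    rcases (by omega : hammingDist p x = 0 ∨ hammingDist q x = 0) with h | h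
    · exact .inl (hammingDist_eq_zero.1 h).symm
    · exact .inr (hammingDist_eq_zero.1 h).symm
  · rintro ⟨rfl, rfl | rfl⟩
    · simp [hammingDist_comm q, hpq]
    · simp [hpq]

theorem existsUnique_hammingDist_add_hammingDist_add_parity_le_one {p q : F n}
    (hpq : hammingDist p q ≤ 1) (β : ZMod 2) :
    ∃! x : F n, hammingDist p x + ((if β = wt x then 0 else 1) + hammingDist q x) ≤ 1 := by
  obtain rfl | hpq : p = q ∨ hammingDist p q = 1 := by rw [← hammingDist_eq_zero]; omega
  · refine ⟨p, ?_, fun x hx => (hammingDist_eq_zero.1 (by omega)).symm⟩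
    simp only [hammingDist_self]
    split <;> omega
  simp only [hammingDist_add_hammingDist_add_parity_le_one_iff hpq]
  have hwt : wt p ≠ wt q := by
    intro h
    have := wt_add_wt p q
    rw [h, hpq, CharTwo.add_self_eq_zero, Nat.cast_one] at this
    exact zero_ne_one this
  by_cases hβ : β = wt q
  · exact ⟨q, ⟨hβ, .inr rfl⟩, by grind⟩
  · have two_valued : ∀ s t u : ZMod 2, s ≠ u → t ≠ u → s = t := by decide
    exact ⟨p, ⟨two_valued _ _ _ hβ hwt, .inl rfl⟩, by grind⟩

end Vasilev

/-- The Vasil'ev code of a perfect code with an arbitrary function `lam`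
is perfect. -/
theorem vasilev_perfect {n : ℕ} (C : Set (F n)) (hC : IsPerfectCode C)
    (lam : F n → ZMod 2) : IsPerfectCode (vasCode C lam) := by
  intro w
  obtain ⟨a, b, c, rfl⟩ := exists_eq_vasVec w
  obtain ⟨y₀, ⟨hy₀C, hy₀⟩, hy₀_unique⟩ := hC (a + c)
  have hswap (y : F n) : hammingDist (a + c) y = hammingDist (a + y) c := by
    simp only [hammingDist_eq_hammingNorm_add, add_right_comm]
  have hclose : ∀ x y, hammingDist (vasVec a b c) (vasVec (x + y) (wt x + lam y) x) ≤ 1 →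
      hammingDist (a + c) y ≤ 1 := fun x y hd => by
    rw [hammingDist_vasVec_codeword] at hd
    have := hammingDist_triangle (a + y) x c
    rw [hammingDist_comm x c] at this
    rw [hswap]
    omega
  obtain ⟨x₀, hx₀, hx₀_unique⟩ :=
    existsUnique_hammingDist_add_hammingDist_add_parity_le_one (hswap y₀ ▸ hy₀) (b + lam y₀)
  refine ⟨vasVec (x₀ + y₀) (wt x₀ + lam y₀) x₀,
    ⟨⟨x₀, y₀, hy₀C, rfl⟩, by rwa [hammingDist_vasVec_codeword]⟩, ?_⟩
  rintro _ ⟨⟨x, y, hyC, rfl⟩, hd⟩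
  obtain rfl := hy₀_unique y ⟨hyC, hclose x y hd⟩
  rw [hammingDist_vasVec_codeword] at hd
  rw [hx₀_unique x hd]
end

section
/- Let C^t ⊆ F^t and C^m ⊆ F^m be perfect binary codes containing the all-zero vectors and let f : C^t → F^m be an arbitrary map. Then the Mollard code M(C^t, C^m) = {(x, y + p1(x), z + p2(x) + f(y)) : x ∈ F^{tm}, y ∈ C^t, z ∈ C^m} ⊆ F^{tm+t+m} is a perfect binary code of length tm + t + m. -/
open Finset

/-! Decode `w = (x, b, c)` in two stages: let `y ∈ Ct` be the codeword nearest to `b + p1 x` and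
`z ∈ Cm` the one nearest to `c + p2 x + f y`. Since `p1` and `p2` do not increase Hamming
distance, every Mollard codeword within distance 1 of `w` is built from these same `y` and `z`,
so only its first block `x + v` is left to choose. With the error vectors `e = b + p1 x + y` and
`e' = c + p2 x + f y + z`, both of weight at most 1, the distance to `w` becomes
`|v| + d(p1 v, e) + d(p2 v, e')`, and exactly one `v` makes this at most 1: `v = 0` if `e` or `e'`
vanishes, and the unit vector at `(i, j)` if `e = e_i` and `e' = e_j`. -/

theorem hammingDist_append_s14 {α : Type*} [DecidableEq α] {a b : ℕ} (u u' : Fin a → α)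
    (v v' : Fin b → α) :
    hammingDist (Fin.append u v) (Fin.append u' v') = hammingDist u u' + hammingDist v v' := by
  simp only [hammingDist, Finset.card_filter, Fin.sum_univ_add, Fin.append_left, Fin.append_right]

section HammingTranslation

variable {ι : Type*} [Fintype ι] {β : ι → Type*} [∀ i, Add (β i)] [∀ i, DecidableEq (β i)]

theorem hammingDist_add_left [∀ i, IsLeftCancelAdd (β i)] (a x y : ∀ i, β i) :
    hammingDist (a + x) (a + y) = hammingDist x y :=
  hammingDist_comp (fun i => (a i + ·)) fun i => add_right_injective (a i)

theorem hammingDist_add_right [∀ i, IsRightCancelAdd (β i)] (a x y : ∀ i, β i) :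
    hammingDist (x + a) (y + a) = hammingDist x y :=
  hammingDist_comp (fun i => (· + a i)) fun i => add_left_injective (a i)

end HammingTranslation

theorem hammingDist_sum_comp_le {α β γ M : Type*} [Fintype α] [Fintype β] [Fintype γ]
    [AddCommMonoid M] [DecidableEq M] (g : α → β → γ)
    (hg : ∀ a a' b b', g a b = g a' b' → a = a') (u v : γ → M) :
    hammingDist (fun a => ∑ b, u (g a b)) (fun a => ∑ b, v (g a b)) ≤ hammingDist u v := by
  rcases isEmpty_or_nonempty β with _ | _
  · simp
  have witness : ∀ a, ∑ b, u (g a b) ≠ ∑ b, v (g a b) → ∃ b, u (g a b) ≠ v (g a b) :=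
    fun a h => by
      by_contra! h'
      exact h (Finset.sum_congr rfl fun b _ => h' b)
  choose! r hr using witness
  exact Finset.card_le_card_of_injOn (fun a => g a (r a))
    (fun a ha => by simpa using hr a (by simpa using ha)) (fun a _ a' _ h => hg _ _ _ _ h)

namespace F

variable {n : ℕ}

theorem neg_eq (a : F n) : -a = a :=
  funext fun i => ZMod.neg_eq_self_mod_two (a i)

theorem add_self (a : F n) : a + a = 0 :=
  funext fun i => CharTwo.add_self_eq_zero (a i)

theorem hammingDist_eq_hammingNorm_add (a b : F n) : hammingDist a b = hammingNorm (a + b) := by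
  rw [hammingDist_eq_hammingNorm, neg_eq]

theorem hammingDist_add_le (a b c c' : F n) :
    hammingDist (a + c) b ≤ hammingDist a (b + c') + hammingDist c c' :=
  calc hammingDist (a + c) b = hammingDist a (b + c) := by
        rw [hammingDist_eq_hammingNorm_add, hammingDist_eq_hammingNorm_add, add_right_comm,
          add_assoc]
    _ ≤ hammingDist a (b + c') + hammingDist (b + c') (b + c) := hammingDist_triangle _ _ _
    _ = hammingDist a (b + c') + hammingDist c c' := by
        rw [hammingDist_add_left, hammingDist_comm c']

theorem hammingNorm_single (i : Fin n) : hammingNorm (Pi.single i 1 : F n) = 1 := by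
  simp [hammingNorm, Pi.single_apply, Finset.filter_eq']

theorem single_injective {i j : Fin n} (h : (Pi.single i 1 : F n) = Pi.single j 1) : i = j := by
  simpa [Pi.single_apply, eq_comm] using congrFun h i

theorem eq_zero_or_eq_single_of_hammingNorm_le_one {u : F n} (h : hammingNorm u ≤ 1) :
    u = 0 ∨ ∃ i, u = Pi.single i 1 := by
  rcases Nat.le_one_iff_eq_zero_or_eq_one.mp h with h | h
  · exact .inl (hammingNorm_eq_zero.mp h)
  · obtain ⟨i, hi⟩ := Finset.card_eq_one.mp h
    refine .inr ⟨i, funext fun j => ?_⟩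
    have hj := Finset.ext_iff.mp hi j
    simp only [Finset.mem_filter, Finset.mem_univ, true_and, Finset.mem_singleton] at hj
    rcases eq_or_ne j i with rfl | hji
    · have h_one : ∀ a : ZMod 2, a ≠ 0 → a = 1 := by decide
      simpa using h_one _ (hj.mpr rfl)
    · simpa [hji] using hj.not.mpr hji

end F

theorem IsPerfectCode.eq_of_hammingDist_le_one {n : ℕ} {C : Set (F n)} (hC : IsPerfectCode C)
    {a y y' : F n} (hy : y ∈ C) (hy' : y' ∈ C) (h : hammingDist a y ≤ 1)
    (h' : hammingDist a y' ≤ 1) : y = y' :=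
  (hC a).unique ⟨hy, h⟩ ⟨hy', h'⟩

section ParityChecks

variable {t m : ℕ}

theorem hammingDist_p1_le (x x' : F (t * m)) : hammingDist (p1 x) (p1 x') ≤ hammingDist x x' :=
  hammingDist_sum_comp_le (fun i j => finProdFinEquiv (i, j))
    (fun _ _ _ _ h => (Prod.ext_iff.mp (finProdFinEquiv.injective h)).1) x x'

theorem hammingDist_p2_le (x x' : F (t * m)) : hammingDist (p2 x) (p2 x') ≤ hammingDist x x' :=
  hammingDist_sum_comp_le (fun j i => finProdFinEquiv (i, j))
    (fun _ _ _ _ h => (Prod.ext_iff.mp (finProdFinEquiv.injective h)).2) x x'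

theorem p1_add (x x' : F (t * m)) : p1 (x + x') = p1 x + p1 x' :=
  funext fun _ => Finset.sum_add_distrib

theorem p2_add (x x' : F (t * m)) : p2 (x + x') = p2 x + p2 x' :=
  funext fun _ => Finset.sum_add_distrib

@[simp] theorem p1_zero : p1 (0 : F (t * m)) = 0 :=
  funext fun _ => Finset.sum_const_zero

@[simp] theorem p2_zero : p2 (0 : F (t * m)) = 0 :=
  funext fun _ => Finset.sum_const_zero

theorem p1_single (i : Fin t) (j : Fin m) :
    p1 (Pi.single (finProdFinEquiv (i, j)) 1 : F (t * m)) = Pi.single i 1 := by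
  funext i'
  by_cases h : i' = i <;> simp [p1, Pi.single_apply, finProdFinEquiv.injective.eq_iff, h]

theorem p2_single (i : Fin t) (j : Fin m) :
    p2 (Pi.single (finProdFinEquiv (i, j)) 1 : F (t * m)) = Pi.single j 1 := by
  funext j'
  by_cases h : j' = j <;> simp [p2, Pi.single_apply, finProdFinEquiv.injective.eq_iff, h]

theorem p1_p2_le_one_cases {e : F t} {e' : F m} {v : F (t * m)}
    (hv : hammingNorm v + hammingDist (p1 v) e + hammingDist (p2 v) e' ≤ 1) :
    (v = 0 ∧ hammingNorm e + hammingNorm e' ≤ 1) ∨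
      ∃ i j, v = Pi.single (finProdFinEquiv (i, j)) 1 ∧ e = Pi.single i 1 ∧ e' = Pi.single j 1 := by
  rcases F.eq_zero_or_eq_single_of_hammingNorm_le_one (by omega : hammingNorm v ≤ 1) with
    rfl | ⟨k, rfl⟩
  · exact .inl ⟨rfl, by simpa using hv⟩
  · obtain ⟨⟨i, j⟩, rfl⟩ := finProdFinEquiv.surjective k
    rw [F.hammingNorm_single, p1_single, p2_single] at hv
    exact .inr ⟨i, j, rfl, (hammingDist_eq_zero.mp (by omega)).symm,
      (hammingDist_eq_zero.mp (by omega)).symm⟩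

theorem existsUnique_p1_p2_le_one {e : F t} {e' : F m} (he : hammingNorm e ≤ 1)
    (he' : hammingNorm e' ≤ 1) :
    ∃! v : F (t * m), hammingNorm v + hammingDist (p1 v) e + hammingDist (p2 v) e' ≤ 1 := by
  refine existsUnique_of_exists_of_unique ?_ fun v w hv hw => ?_
  · rcases F.eq_zero_or_eq_single_of_hammingNorm_le_one he with rfl | ⟨i, rfl⟩
    · exact ⟨0, by simpa using he'⟩
    rcases F.eq_zero_or_eq_single_of_hammingNorm_le_one he' with rfl | ⟨j, rfl⟩
    · exact ⟨0, by simpa using he⟩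
    · exact ⟨Pi.single (finProdFinEquiv (i, j)) 1,
        by simp [F.hammingNorm_single, p1_single, p2_single]⟩
  rcases p1_p2_le_one_cases hv with ⟨rfl, hv⟩ | ⟨i, j, rfl, rfl, rfl⟩ <;>
    rcases p1_p2_le_one_cases hw with ⟨rfl, hw⟩ | ⟨i', j', rfl, hi, hj⟩
  · rfl
  · simp [hi, hj, F.hammingNorm_single] at hv
  · simp [F.hammingNorm_single] at hw
  · rw [F.single_injective hi, F.single_injective hj]

end ParityChecks

section MollardWords

variable {t m : ℕ}

theorem mollVec_eq_append (x : F (t * m)) (b : F t) (c : F m) :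
    mollVec x b c = Fin.append (Fin.append x b) c := by
  funext i
  refine Fin.addCases (fun k => Fin.addCases (fun k => ?_) (fun k => ?_) k) (fun k => ?_) i <;>
    simp [mollVec, -Fin.natAdd_eq_addNat]
  omega

theorem exists_mollVec_eq (w : F (t * m + t + m)) : ∃ x b c, mollVec x b c = w :=
  ⟨_, _, _, by rw [mollVec_eq_append, Fin.append_castAdd_natAdd, Fin.append_castAdd_natAdd]⟩

theorem hammingDist_mollVec (x x' : F (t * m)) (b b' : F t) (c c' : F m) :
    hammingDist (mollVec x b c) (mollVec x' b' c') =
      hammingDist x x' + hammingDist b b' + hammingDist c c' := by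
  rw [mollVec_eq_append, mollVec_eq_append, hammingDist_append_s14, hammingDist_append_s14]

theorem hammingDist_mollVec_add (x v : F (t * m)) (b y : F t) (c z s : F m) :
    hammingDist (mollVec x b c) (mollVec (x + v) (y + p1 (x + v)) (z + p2 (x + v) + s)) =
      hammingNorm v + hammingDist (p1 v) (b + p1 x + y) +
        hammingDist (p2 v) (c + p2 x + s + z) := by
  rw [hammingDist_mollVec]
  simp only [p1_add, p2_add, F.hammingDist_eq_hammingNorm_add]
  rw [← add_assoc x x v, F.add_self, zero_add]
  congr 1
  · congr 2; abel
  · congr 1; abel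

theorem eq_of_hammingDist_mollVec_le_one {Ct : Set (F t)} {Cm : Set (F m)}
    (hCt : IsPerfectCode Ct) (hCm : IsPerfectCode Cm) (f : F t → F m)
    {x x' : F (t * m)} {b y y' : F t} {c z z' : F m}
    (hy : y ∈ Ct) (hyd : hammingDist (b + p1 x) y ≤ 1)
    (hz : z ∈ Cm) (hzd : hammingDist (c + p2 x + f y) z ≤ 1) (hy' : y' ∈ Ct) (hz' : z' ∈ Cm)
    (hd : hammingDist (mollVec x b c) (mollVec x' (y' + p1 x') (z' + p2 x' + f y')) ≤ 1) :
    y' = y ∧ z' = z := by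
  rw [hammingDist_mollVec] at hd
  have hy'd : hammingDist (b + p1 x) y' ≤ 1 :=
    calc _ ≤ hammingDist b (y' + p1 x') + hammingDist (p1 x) (p1 x') := F.hammingDist_add_le ..
      _ ≤ hammingDist b (y' + p1 x') + hammingDist x x' := by
          gcongr; exact hammingDist_p1_le ..
      _ ≤ 1 := by omega
  obtain rfl := hCt.eq_of_hammingDist_le_one hy' hy hy'd hyd
  have hz'd : hammingDist (c + p2 x + f y') z' ≤ 1 :=
    calc _ ≤ hammingDist c (z' + (p2 x' + f y')) + hammingDist (p2 x + f y') (p2 x' + f y') := by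
          rw [add_assoc]; exact F.hammingDist_add_le ..
      _ ≤ hammingDist c (z' + p2 x' + f y') + hammingDist x x' := by
          rw [hammingDist_add_right, add_assoc]; gcongr; exact hammingDist_p2_le ..
      _ ≤ 1 := by omega
  exact ⟨rfl, hCm.eq_of_hammingDist_le_one hz' hz hz'd hzd⟩

end MollardWords

theorem mollard_perfect_general {t m : ℕ} (Ct : Set (F t)) (Cm : Set (F m))
    (hCt : IsPerfectCode Ct) (hCm : IsPerfectCode Cm)
    (f : F t → F m) : IsPerfectCode (mollCode Ct Cm f) := by
  intro w
  obtain ⟨x, b, c, rfl⟩ := exists_mollVec_eq w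
  obtain ⟨y, ⟨hy, hyd⟩, -⟩ := hCt (b + p1 x)
  obtain ⟨z, ⟨hz, hzd⟩, -⟩ := hCm (c + p2 x + f y)
  obtain ⟨v, hv, hv_unique⟩ :=
    existsUnique_p1_p2_le_one (e := b + p1 x + y) (e' := c + p2 x + f y + z)
      (by rwa [← F.hammingDist_eq_hammingNorm_add]) (by rwa [← F.hammingDist_eq_hammingNorm_add])
  refine ⟨mollVec (x + v) (y + p1 (x + v)) (z + p2 (x + v) + f y),
    ⟨⟨x + v, y, hy, z, hz, rfl⟩, by rwa [hammingDist_mollVec_add]⟩, ?_⟩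
  rintro _ ⟨⟨x', y', hy', z', hz', rfl⟩, hd⟩
  obtain ⟨rfl, rfl⟩ := eq_of_hammingDist_mollVec_le_one hCt hCm f hy hyd hz hzd hy' hz' hd
  have hx' : x' = x + (x + x') := by rw [← add_assoc, F.add_self, zero_add]
  rw [hx', hammingDist_mollVec_add] at hd
  rw [hx', hv_unique _ hd]

/-- The Mollard code of two perfect codes containing `0` with an arbitrary
function `f` is perfect. -/
theorem mollard_perfect {t m : ℕ} (Ct : Set (F t)) (Cm : Set (F m))
    (hCt : IsPerfectCode Ct) (h0t : (0 : F t) ∈ Ct)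
    (hCm : IsPerfectCode Cm) (h0m : (0 : F m) ∈ Cm)
    (f : F t → F m) : IsPerfectCode (mollCode Ct Cm f) :=
  mollard_perfect_general Ct Cm hCt hCm f
end
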